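/- arXiv:2008.01060 — 5 statements merged into one kernel-verified Lean document; each statement's English description precedes it below -/
import Mathlib

section
/- Let g(x) = exp(-π|x|²) on ℝ^d, h^{(l)} = ∂_l g for l = 1,…,d, and k = Δg. Then for all α, β > 0, ∑_{l=1}^d h^{(l)}_α ∗ h^{(l)}_β = (αβ/(α²+β²)) k_{√(α²+β²)}, where f_λ(x) = λ^{-d} f(x/λ). -/
/-!
Everything factorizes over the coordinates: `g(x) = ∏ᵢ γ(xᵢ)` with `γ(t) = exp(-πt²)`, and
`h^{(l)}`, `∂_l² g` arise by replacing the `l`-th factor with `γ'`, `γ''`. Dilation and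
convolution respect this product structure (Fubini), so the `l`-th summand is a product of
one-dimensional convolutions: `γ_α ∗ γ_β = γ_s` with `s² = α² + β²`, and
`γ'_α ∗ γ'_β = (αβ/s²) γ''_s`. Both follow by completing the square,
`γ(t/α) γ((c-t)/β) = γ(c/s) γ((t-m)/λ)` with `m = α²c/s²` and `λ = αβ/s`, and from the Gaussian
moments of order 0, 1 and 2. Summing over `l` gives the Laplacian.
-/

open Real MeasureTheory

/-- The standard Gaussian `g(x) = exp(-π|x|²)` on `ℝ^d`. -/
noncomputable def gauss (d : ℕ) (x : EuclideanSpace ℝ (Fin d)) : ℝ :=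
  Real.exp (-π * ‖x‖ ^ 2)

/-- The L¹-normalized dilate `f_λ(x) = λ^{-d} f(λ⁻¹ x)`. -/
noncomputable def dil (d : ℕ) (l : ℝ) (f : EuclideanSpace ℝ (Fin d) → ℝ)
    (x : EuclideanSpace ℝ (Fin d)) : ℝ :=
  (l ^ d)⁻¹ * f (l⁻¹ • x)

/-- The `l`-th partial derivative `h^{(l)} = ∂_l g` of the standard Gaussian. -/
noncomputable def gaussD (d : ℕ) (l : Fin d) (x : EuclideanSpace ℝ (Fin d)) : ℝ :=
  fderiv ℝ (gauss d) x (EuclideanSpace.single l 1)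

/-- The Laplacian `k = Δg` of the standard Gaussian. -/
noncomputable def gaussLap (d : ℕ) (x : EuclideanSpace ℝ (Fin d)) : ℝ :=
  ∑ l : Fin d, fderiv ℝ (fun y => fderiv ℝ (gauss d) y (EuclideanSpace.single l 1)) x
    (EuclideanSpace.single l 1)

noncomputable def gauss₁ (t : ℝ) : ℝ := exp (-π * t ^ 2)
noncomputable def gauss₁' (t : ℝ) : ℝ := -2 * π * t * gauss₁ t
noncomputable def gauss₁'' (t : ℝ) : ℝ := (4 * π ^ 2 * t ^ 2 - 2 * π) * gauss₁ t

theorem integral_mul_exp_neg_mul_sq_eq_zero (b : ℝ) : ∫ t : ℝ, t * exp (-b * t ^ 2) = 0 := by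
  have h := integral_neg_eq_self (fun t : ℝ => t * exp (-b * t ^ 2)) volume
  simp only [neg_sq, neg_mul, integral_neg] at h
  simp only [neg_mul]
  linarith

theorem integrable_sq_mul_exp_neg_mul_sq {b : ℝ} (hb : 0 < b) :
    Integrable fun t : ℝ => t ^ 2 * exp (-b * t ^ 2) := by
  simpa [rpow_two] using integrable_rpow_mul_exp_neg_mul_sq hb (s := 2) (by norm_num)

theorem integral_sq_mul_exp_neg_mul_sq {b : ℝ} (hb : 0 < b) :
    ∫ t : ℝ, t ^ 2 * exp (-b * t ^ 2) = √(π / b) / (2 * b) := by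
  have hhalf : ∫ t : ℝ, t ^ 2 * exp (-b * t ^ 2)
      = 2 * ∫ t in Set.Ioi (0 : ℝ), t ^ (2 : ℝ) * exp (-b * t ^ (2 : ℝ)) := by
    rw [← integral_comp_abs (f := fun t : ℝ => t ^ 2 * exp (-b * t ^ 2))]
    simp [sq_abs]
  have hgamma : Gamma ((2 + 1) / 2) = √π / 2 := by
    rw [show ((2 : ℝ) + 1) / 2 = 1 / 2 + 1 by norm_num, Gamma_add_one (by norm_num),
      Gamma_one_half_eq]
    ring
  have hpow : b ^ (-(2 + 1 : ℝ) / 2) = (b * √b)⁻¹ := by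
    rw [show (-(2 + 1 : ℝ) / 2) = -(1 + 1 / 2) by norm_num, rpow_neg hb.le, rpow_add hb,
      rpow_one, ← sqrt_eq_rpow]
  rw [hhalf, integral_rpow_mul_exp_neg_mul_rpow two_pos (by norm_num) hb, hgamma, hpow,
    sqrt_div pi_pos.le]
  have : 0 < √b := sqrt_pos.mpr hb
  field_simp

theorem integral_quadratic_mul_exp_neg_mul_sq {b : ℝ} (hb : 0 < b) (p q r : ℝ) :
    ∫ t : ℝ, (p + q * t + r * t ^ 2) * exp (-b * t ^ 2) = (p + r / (2 * b)) * √(π / b) := by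
  have h0 := (integrable_exp_neg_mul_sq hb).const_mul p
  have h1 := (integrable_mul_exp_neg_mul_sq hb).const_mul q
  have h2 := (integrable_sq_mul_exp_neg_mul_sq hb).const_mul r
  have h01 : Integrable fun t : ℝ => p * exp (-b * t ^ 2) + q * (t * exp (-b * t ^ 2)) :=
    h0.add h1
  simp_rw [add_mul, mul_assoc]
  rw [integral_add h01 h2, integral_add h0 h1, integral_const_mul, integral_const_mul,
    integral_const_mul, integral_gaussian, integral_mul_exp_neg_mul_sq_eq_zero,
    integral_sq_mul_exp_neg_mul_sq hb]
  ring

theorem gauss₁_inv_mul (a t : ℝ) : gauss₁ (a⁻¹ * t) = exp (-(π / a ^ 2) * t ^ 2) := by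
  rw [gauss₁]; ring_nf

theorem sqrt_pi_div_pi_div_sq {a : ℝ} (ha : 0 < a) : √(π / (π / a ^ 2)) = a := by
  rw [div_div_cancel₀ pi_ne_zero, sqrt_sq ha.le]

theorem integral_gauss₁_inv_mul {a : ℝ} (ha : 0 < a) : ∫ t, gauss₁ (a⁻¹ * t) = a := by
  simp_rw [gauss₁_inv_mul, integral_gaussian, sqrt_pi_div_pi_div_sq ha]

theorem integral_quadratic_mul_gauss₁_inv_mul {a : ℝ} (ha : 0 < a) (p q r : ℝ) :
    ∫ t, (p + q * t + r * t ^ 2) * gauss₁ (a⁻¹ * t) = (p + r * a ^ 2 / (2 * π)) * a := by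
  simp_rw [gauss₁_inv_mul]
  rw [integral_quadratic_mul_exp_neg_mul_sq (by positivity), sqrt_pi_div_pi_div_sq ha]
  field_simp

theorem gauss₁_mul_gauss₁ {α β s : ℝ} (hα : α ≠ 0) (hβ : β ≠ 0) (hs : s ^ 2 = α ^ 2 + β ^ 2)
    (c t : ℝ) :
    gauss₁ (α⁻¹ * t) * gauss₁ (β⁻¹ * (c - t)) =
      gauss₁ (s⁻¹ * c) * gauss₁ ((α * β / s)⁻¹ * (t - α ^ 2 / s ^ 2 * c)) := by
  have hs0 : s ≠ 0 := by rintro rfl; nlinarith [sq_pos_of_ne_zero hα, sq_pos_of_ne_zero hβ]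
  simp only [gauss₁, ← exp_add]
  congr 1
  field_simp
  rw [hs]
  ring

theorem integral_gauss₁_conv_gauss₁ {α β s : ℝ} (hα : 0 < α) (hβ : 0 < β)
    (hs : s ^ 2 = α ^ 2 + β ^ 2) (hs0 : 0 < s) (c : ℝ) :
    ∫ t, α⁻¹ * gauss₁ (α⁻¹ * t) * (β⁻¹ * gauss₁ (β⁻¹ * (c - t))) = s⁻¹ * gauss₁ (s⁻¹ * c) := by
  calc ∫ t, α⁻¹ * gauss₁ (α⁻¹ * t) * (β⁻¹ * gauss₁ (β⁻¹ * (c - t)))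
      = ∫ t, α⁻¹ * β⁻¹ * gauss₁ (s⁻¹ * c) * gauss₁ ((α * β / s)⁻¹ * (t - α ^ 2 / s ^ 2 * c)) := by
        congr 1 with t
        linear_combination α⁻¹ * β⁻¹ * gauss₁_mul_gauss₁ hα.ne' hβ.ne' hs c t
    _ = α⁻¹ * β⁻¹ * gauss₁ (s⁻¹ * c) * (α * β / s) := by
        rw [integral_const_mul, integral_sub_right_eq_self (fun t => gauss₁ ((α * β / s)⁻¹ * t)),
          integral_gauss₁_inv_mul (by positivity)]
    _ = s⁻¹ * gauss₁ (s⁻¹ * c) := by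
        field_simp

theorem integral_gauss₁'_conv_gauss₁' {α β s : ℝ} (hα : 0 < α) (hβ : 0 < β)
    (hs : s ^ 2 = α ^ 2 + β ^ 2) (hs0 : 0 < s) (c : ℝ) :
    ∫ t, α⁻¹ * gauss₁' (α⁻¹ * t) * (β⁻¹ * gauss₁' (β⁻¹ * (c - t))) =
      α * β / s ^ 2 * (s⁻¹ * gauss₁'' (s⁻¹ * c)) := by
  set m := α ^ 2 / s ^ 2 * c with hm
  calc ∫ t, α⁻¹ * gauss₁' (α⁻¹ * t) * (β⁻¹ * gauss₁' (β⁻¹ * (c - t)))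
      = ∫ t, 4 * π ^ 2 / (α * β) ^ 2 * gauss₁ (s⁻¹ * c) *
          -- `t * (c - t)` expanded around the new centre `m`
          ((m * (c - m) + (c - 2 * m) * (t - m) + (-1) * (t - m) ^ 2) *
            gauss₁ ((α * β / s)⁻¹ * (t - m))) := by
        congr 1 with t
        rw [gauss₁', gauss₁']
        linear_combination 4 * π ^ 2 / (α * β) ^ 2 * (t * (c - t)) *
          gauss₁_mul_gauss₁ hα.ne' hβ.ne' hs c t
    _ = 4 * π ^ 2 / (α * β) ^ 2 * gauss₁ (s⁻¹ * c) *
          ((m * (c - m) + (-1) * (α * β / s) ^ 2 / (2 * π)) * (α * β / s)) := by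
        rw [integral_const_mul, integral_sub_right_eq_self
          (fun t => (m * (c - m) + (c - 2 * m) * t + (-1) * t ^ 2) * gauss₁ ((α * β / s)⁻¹ * t)),
          integral_quadratic_mul_gauss₁_inv_mul (by positivity)]
    _ = α * β / s ^ 2 * (s⁻¹ * gauss₁'' (s⁻¹ * c)) := by
        rw [gauss₁'', hm]
        field_simp
        linear_combination 8 * π * c ^ 2 * gauss₁ (c / s) * hs

theorem Finset.prod_ite_eq_mul_prod_erase {ι M : Type*} [Fintype ι] [DecidableEq ι] [CommMonoid M]
    (l : ι) (f g : ι → M) :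
    ∏ i, (if i = l then f i else g i) = f l * ∏ i ∈ univ.erase l, g i := by
  rw [← mul_prod_erase _ _ (mem_univ l), if_pos rfl]
  exact congrArg _ (prod_congr rfl fun i hi => if_neg (ne_of_mem_erase hi))

theorem integral_euclideanSpace_prod {ι 𝕜 : Type*} [Fintype ι] [RCLike 𝕜] (f : ι → ℝ → 𝕜) :
    ∫ y : EuclideanSpace ℝ ι, ∏ i, f i (y i) = ∏ i, ∫ t, f i t := by
  rw [← (PiLp.volume_preserving_toLp ι).integral_comp
    (MeasurableEquiv.toLp 2 _).measurableEmbedding]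
  exact integral_fintype_prod_volume_eq_prod f

theorem integral_prod_mul_prod_sub {ι 𝕜 : Type*} [Fintype ι] [RCLike 𝕜] (f g : ι → ℝ → 𝕜)
    (x : EuclideanSpace ℝ ι) :
    ∫ y : EuclideanSpace ℝ ι, (∏ i, f i (y i)) * ∏ i, g i ((x - y) i) =
      ∏ i, ∫ t, f i t * g i (x i - t) := by
  simp_rw [← Finset.prod_mul_distrib, PiLp.sub_apply]
  exact integral_euclideanSpace_prod fun i t => f i t * g i (x i - t)

theorem dil_prod (d : ℕ) (a : ℝ) (f : Fin d → ℝ → ℝ) (x : EuclideanSpace ℝ (Fin d)) :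
    dil d a (fun y => ∏ i, f i (y i)) x = ∏ i, a⁻¹ * f i (a⁻¹ * x i) := by
  simp [dil, Finset.prod_mul_distrib]

theorem gauss_eq_prod (d : ℕ) (x : EuclideanSpace ℝ (Fin d)) : gauss d x = ∏ i, gauss₁ (x i) := by
  simp [gauss, gauss₁, EuclideanSpace.norm_sq_eq, Finset.mul_sum, ← exp_sum]

theorem mul_gauss_eq_prod {d : ℕ} (l : Fin d) (p f : ℝ → ℝ) (hf : ∀ t, f t = p t * gauss₁ t)
    (x : EuclideanSpace ℝ (Fin d)) :
    p (x l) * gauss d x = ∏ i, (if i = l then f else gauss₁) (x i) := by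
  simp only [ite_apply]
  rw [Finset.prod_ite_eq_mul_prod_erase, hf, gauss_eq_prod,
    ← Finset.mul_prod_erase _ _ (Finset.mem_univ l), mul_assoc]

theorem hasFDerivAt_gauss (d : ℕ) (x : EuclideanSpace ℝ (Fin d)) :
    HasFDerivAt (gauss d) ((-2 * π * gauss d x) • innerSL ℝ x) x := by
  have h : HasFDerivAt (gauss d) _ x :=
    ((hasStrictFDerivAt_norm_sq x).hasFDerivAt.const_mul (-π)).exp
  refine h.congr_fderiv ?_
  ext y
  simp only [neg_mul, neg_smul, smul_neg, neg_apply, smul_apply, coe_innerSL_apply, nsmul_eq_mul,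
    Nat.cast_ofNat, smul_eq_mul, gauss, neg_inj]
  ring

theorem gaussD_apply (d : ℕ) (l : Fin d) (x : EuclideanSpace ℝ (Fin d)) :
    gaussD d l x = -2 * π * x l * gauss d x := by
  simp only [gaussD, (hasFDerivAt_gauss d x).fderiv, neg_mul, neg_smul, neg_apply, smul_apply,
    coe_innerSL_apply, EuclideanSpace.inner_single_right, ringHom_apply, one_mul, smul_eq_mul,
    neg_inj]
  ring

theorem fderiv_gaussD_apply_single (d : ℕ) (l : Fin d) (x : EuclideanSpace ℝ (Fin d)) :
    fderiv ℝ (gaussD d l) x (EuclideanSpace.single l 1) =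
      (4 * π ^ 2 * x l ^ 2 - 2 * π) * gauss d x := by
  have hcoord : HasFDerivAt (fun y : EuclideanSpace ℝ (Fin d) => y l)
      (EuclideanSpace.proj l : EuclideanSpace ℝ (Fin d) →L[ℝ] ℝ) x := by
    simpa using (EuclideanSpace.proj (𝕜 := ℝ) l).hasFDerivAt
  have h : HasFDerivAt (fun y => -2 * π * y l * gauss d y) _ x :=
    (hcoord.const_mul (-2 * π)).mul (hasFDerivAt_gauss d x)
  rw [funext (gaussD_apply d l), h.fderiv]
  simp only [neg_mul, neg_smul, smul_neg, neg_neg, add_apply, smul_apply, coe_innerSL_apply,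
    EuclideanSpace.inner_single_right, ringHom_apply, one_mul, smul_eq_mul, neg_apply,
    PiLp.proj_apply, PiLp.single_eq_same, mul_one]
  ring

theorem gaussD_eq_prod (d : ℕ) (l : Fin d) :
    gaussD d l = fun x => ∏ i, (if i = l then gauss₁' else gauss₁) (x i) :=
  funext fun x => (gaussD_apply d l x).trans (mul_gauss_eq_prod l _ gauss₁' (fun _ => rfl) x)

theorem fderiv_gaussD_single_eq_prod (d : ℕ) (l : Fin d) :
    (fun x => fderiv ℝ (gaussD d l) x (EuclideanSpace.single l 1)) =
      fun x => ∏ i, (if i = l then gauss₁'' else gauss₁) (x i) :=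
  funext fun x =>
    (fderiv_gaussD_apply_single d l x).trans (mul_gauss_eq_prod l _ gauss₁'' (fun _ => rfl) x)

theorem integral_dil_gaussD_mul_dil_gaussD {d : ℕ} {α β : ℝ} (hα : 0 < α) (hβ : 0 < β)
    (l : Fin d) (x : EuclideanSpace ℝ (Fin d)) :
    ∫ y, dil d α (gaussD d l) y * dil d β (gaussD d l) (x - y) =
      α * β / (α ^ 2 + β ^ 2) * dil d √(α ^ 2 + β ^ 2)
        (fun y => fderiv ℝ (gaussD d l) y (EuclideanSpace.single l 1)) x := by
  set s := √(α ^ 2 + β ^ 2)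
  have hs : s ^ 2 = α ^ 2 + β ^ 2 := sq_sqrt (by positivity)
  have hs0 : 0 < s := by positivity
  set F : Fin d → ℝ → ℝ := fun i => if i = l then gauss₁' else gauss₁
  have hconv : ∀ i, ∫ t, α⁻¹ * F i (α⁻¹ * t) * (β⁻¹ * F i (β⁻¹ * (x i - t))) =
      if i = l then α * β / s ^ 2 * (s⁻¹ * gauss₁'' (s⁻¹ * x i))
      else s⁻¹ * gauss₁ (s⁻¹ * x i) := by
    intro i
    by_cases h : i = l
    · simp only [F, h, if_true]
      exact integral_gauss₁'_conv_gauss₁' hα hβ hs hs0 _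
    · simp only [F, h, if_false]
      exact integral_gauss₁_conv_gauss₁ hα hβ hs hs0 _
  rw [fderiv_gaussD_single_eq_prod, gaussD_eq_prod, dil_prod]
  simp_rw [dil_prod]
  rw [integral_prod_mul_prod_sub (fun i t => α⁻¹ * F i (α⁻¹ * t))
      (fun i t => β⁻¹ * F i (β⁻¹ * t)), Finset.prod_congr rfl fun i _ => hconv i, ← hs]
  simp only [ite_apply, mul_ite, Finset.prod_ite_eq_mul_prod_erase, mul_assoc]

/-- `∑_{l=1}^d h^{(l)}_α ∗ h^{(l)}_β = (αβ/(α²+β²)) k_{√(α²+β²)}`. -/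
theorem gaussD_conv_gaussD (d : ℕ) (α β : ℝ) (hα : 0 < α) (hβ : 0 < β)
    (x : EuclideanSpace ℝ (Fin d)) :
    (∑ l : Fin d, ∫ y : EuclideanSpace ℝ (Fin d),
        dil d α (gaussD d l) y * dil d β (gaussD d l) (x - y)) =
      α * β / (α ^ 2 + β ^ 2) * dil d (Real.sqrt (α ^ 2 + β ^ 2)) (gaussLap d) x := by
  rw [Finset.sum_congr rfl fun l _ => integral_dil_gaussD_mul_dil_gaussD hα hβ l x]
  simp only [dil, gaussLap, Finset.mul_sum]
  rfl
end

section
/- There exists a constant C = C(d) > 0 such that for every x ∈ ℝ^d, (1+|x|)^{-d-1} ≤ C ∫_1^∞ g_γ(x) γ^{-2} dγ, where g_γ(x) = γ^{-d} exp(-π|x/γ|²). In words, the Schwartz tail (1+|x|)^{-d-1} is dominated by a superposition of dilated Gaussians. -/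
/-!
For `γ ∈ (R, 2R]` with `R = 1 + |x|` we have `|x/γ| ≤ 1`, so the integrand
`γ^{-d-2} exp(-π|x/γ|²)` is at least `e^{-π} (2R)^{-d-2}`. Integrating over this window of length
`R` bounds the superposition below by `e^{-π} 2^{-d-2} R^{-d-1}`, which is the Schwartz tail up to
the constant `e^{π} 2^{d+2}`.
-/

open Real MeasureTheory

theorem dil_gauss_apply (d : ℕ) {γ : ℝ} (hγ : 0 < γ) (x : EuclideanSpace ℝ (Fin d)) :
    dil d γ (gauss d) x = (γ ^ d)⁻¹ * Real.exp (-π * (‖x‖ / γ) ^ 2) := by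
  rw [dil, gauss, norm_smul, norm_inv, Real.norm_of_nonneg hγ.le, div_eq_inv_mul]

theorem dil_gauss_div_sq_nonneg (d : ℕ) {γ : ℝ} (hγ : 0 < γ) (x : EuclideanSpace ℝ (Fin d)) :
    0 ≤ dil d γ (gauss d) x / γ ^ 2 := by
  rw [dil_gauss_apply d hγ]
  positivity

theorem dil_gauss_div_sq_le (d : ℕ) {γ : ℝ} (hγ : 1 ≤ γ) (x : EuclideanSpace ℝ (Fin d)) :
    dil d γ (gauss d) x / γ ^ 2 ≤ γ ^ (-2 : ℝ) := by
  have hγ0 : 0 < γ := one_pos.trans_le hγ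
  rw [dil_gauss_apply d hγ0, Real.rpow_neg hγ0.le, Real.rpow_two, div_eq_mul_inv]
  refine mul_le_of_le_one_left (by positivity) (mul_le_one₀ ?_ (by positivity) ?_)
  · exact inv_le_one_of_one_le₀ (one_le_pow₀ hγ)
  · exact Real.exp_le_one_iff.mpr (by nlinarith [Real.pi_pos, sq_nonneg (‖x‖ / γ)])

theorem le_dil_gauss_div_sq (d : ℕ) {γ s : ℝ} (x : EuclideanSpace ℝ (Fin d)) (hxγ : ‖x‖ ≤ γ)
    (hγ : 0 < γ) (hγs : γ ≤ s) :
    Real.exp (-π) * (s ^ (d + 2))⁻¹ ≤ dil d γ (gauss d) x / γ ^ 2 := by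
  have hratio : (‖x‖ / γ) ^ 2 ≤ 1 :=
    pow_le_one₀ (by positivity) ((div_le_one hγ).mpr hxγ)
  rw [dil_gauss_apply d hγ, div_eq_mul_inv, mul_right_comm, ← mul_inv, ← pow_add, mul_comm]
  gcongr
  nlinarith [Real.pi_pos]

theorem integrableOn_dil_gauss_div_sq (d : ℕ) (x : EuclideanSpace ℝ (Fin d)) :
    IntegrableOn (fun γ => dil d γ (gauss d) x / γ ^ 2) (Set.Ioi 1) := by
  refine (integrableOn_Ioi_rpow_of_lt (by norm_num : (-2 : ℝ) < -1) one_pos).mono' ?_ ?_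
  · apply Measurable.aestronglyMeasurable
    simp only [dil, gauss]
    fun_prop
  · filter_upwards [ae_restrict_mem measurableSet_Ioi] with γ hγ
    rw [Real.norm_of_nonneg (dil_gauss_div_sq_nonneg d (one_pos.trans hγ) x)]
    exact dil_gauss_div_sq_le d hγ.le x

theorem le_setIntegral_dil_gauss_div_sq (d : ℕ) {R : ℝ} (hR : 1 ≤ R)
    (x : EuclideanSpace ℝ (Fin d)) (hxR : ‖x‖ ≤ R) :
    Real.exp (-π) * ((2 * R) ^ (d + 2))⁻¹ * R ≤
      ∫ γ in Set.Ioi (1 : ℝ), dil d γ (gauss d) x / γ ^ 2 := by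
  have hwindow : Set.Ioc R (2 * R) ⊆ Set.Ioi 1 := fun γ hγ => hR.trans_lt hγ.1
  have hint := integrableOn_dil_gauss_div_sq d x
  calc Real.exp (-π) * ((2 * R) ^ (d + 2))⁻¹ * R
      = Real.exp (-π) * ((2 * R) ^ (d + 2))⁻¹ * volume.real (Set.Ioc R (2 * R)) := by
        rw [Real.volume_real_Ioc_of_le (by linarith)]
        ring
    _ ≤ ∫ γ in Set.Ioc R (2 * R), dil d γ (gauss d) x / γ ^ 2 := by
        rw [mul_comm _ (volume.real _)]
        refine setIntegral_ge_of_const_le measurableSet_Ioc measure_Ioc_lt_top.ne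
          (fun γ hγ => le_dil_gauss_div_sq d x (hxR.trans hγ.1.le) (by linarith [hγ.1]) hγ.2)
          (hint.mono_set hwindow)
    _ ≤ ∫ γ in Set.Ioi (1 : ℝ), dil d γ (gauss d) x / γ ^ 2 := by
        refine setIntegral_mono_set hint ?_ hwindow.eventuallyLE
        filter_upwards [ae_restrict_mem measurableSet_Ioi] with γ hγ
        exact dil_gauss_div_sq_nonneg d (one_pos.trans hγ) x

/-- The Schwartz tail `(1+|x|)^{-d-1}` is dominated by a superposition of dilated
Gaussians: `(1+|x|)^{-d-1} ≤ C ∫_1^∞ g_γ(x) γ^{-2} dγ`. -/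
theorem schwartz_tail_le_gaussian_superposition (d : ℕ) :
    ∃ C > (0 : ℝ), ∀ x : EuclideanSpace ℝ (Fin d),
      (1 + ‖x‖) ^ (-(d : ℝ) - 1) ≤
        C * ∫ γ in Set.Ioi (1 : ℝ), dil d γ (gauss d) x / γ ^ 2 := by
  refine ⟨Real.exp π * 2 ^ (d + 2), by positivity, fun x => ?_⟩
  set R := 1 + ‖x‖
  have hR : 1 ≤ R := le_add_of_nonneg_right (norm_nonneg x)
  have hR0 : 0 < R := one_pos.trans_le hR
  have htail : R ^ (-(d : ℝ) - 1) = Real.exp π * 2 ^ (d + 2) *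
      (Real.exp (-π) * ((2 * R) ^ (d + 2))⁻¹ * R) := by
    rw [show -(d : ℝ) - 1 = -((d + 1 : ℕ) : ℝ) by push_cast; ring, Real.rpow_neg hR0.le,
      Real.rpow_natCast, Real.exp_neg, mul_pow, pow_succ R (d + 1)]
    field_simp
  rw [htail]
  gcongr
  exact le_setIntegral_dil_gauss_div_sq d hR x (le_add_of_nonneg_left zero_le_one)
end

section
/- Let (Ω, F, P) be a probability space with a filtration G₀ ⊆ G₁ ⊆ G₂ ⊆ ⋯ ⊆ F, and write E_m f := E(f | G_m). Let f be a nonnegative bounded measurable function and let m, m₁, …, m_n be nonnegative integers with m ≤ min{m₁,…,m_n}. Then E_m( f · (E_{m₁}f) · (E_{m₂}f) ⋯ (E_{m_n}f) ) ≥ (E_m f)^{n+1} almost surely. -/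
open MeasureTheory
open scoped ENNReal

/-!
Write `g_k = E_k f`. Conditional Jensen for `x ↦ x ^ q` and the tower property give
`E_j (g_k ^ q) ≥ g_j ^ q` for `j ≤ k`. Conditioning on `𝒢 K` with `K` above all indices replaces
`f` by `g_K`. Then condition on the largest remaining index `k'`: the other factors are
`𝒢 k'`-measurable and pull out, while `E_{k'} (g_K ^ q) ≥ g_{k'} ^ q` absorbs the power into the
factor `g_{k'}`, raising the exponent by one. After `n` such steps only `E_m (g_k ^ (n + 1))`
remains, which dominates `g_m ^ (n + 1)` by the first inequality.
-/

section

variable {Ω : Type*} {m0 : MeasurableSpace Ω} {μ : Measure Ω}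

theorem MeasureTheory.MemLp.pow_top {X : Ω → ℝ} (hX : MemLp X ∞ μ) (q : ℕ) :
    MemLp (fun ω => X ω ^ q) ∞ μ := by
  induction q with
  | zero => simpa using memLp_top_const (μ := μ) (1 : ℝ)
  | succ q ih => simpa only [pow_succ] using hX.mul' ih

section SubSigmaAlgebras

variable [IsFiniteMeasure μ] {m₁ m₂ : MeasurableSpace Ω}

theorem pow_condExp_le_condExp_pow (hm₂ : m₂ ≤ m0) {X : Ω → ℝ} (hX : MemLp X ∞ μ)
    (hX0 : 0 ≤ᵐ[μ] X) (q : ℕ) :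
    ∀ᵐ ω ∂μ, μ[X|m₂] ω ^ q ≤ μ[fun ω => X ω ^ q|m₂] ω :=
  (convexOn_pow q).map_condExp_le hm₂
    ((continuous_pow q).lowerSemicontinuous.lowerSemicontinuousOn _) hX0 isClosed_Ici
    (hX.integrable le_top) ((hX.pow_top q).integrable le_top)

theorem condExp_condExp_mul_of_le (hm₁₂ : m₁ ≤ m₂) (hm₂ : m₂ ≤ m0) {X Y : Ω → ℝ}
    (hY : StronglyMeasurable[m₂] Y) (hXY : Integrable (fun ω => X ω * Y ω) μ)
    (hX : Integrable X μ) :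
    μ[fun ω => μ[X|m₂] ω * Y ω|m₁] =ᵐ[μ] μ[fun ω => X ω * Y ω|m₁] :=
  (condExp_congr_ae (condExp_mul_of_stronglyMeasurable_right hY hXY hX).symm).trans
    (condExp_condExp_of_le hm₁₂ hm₂)

theorem condExp_pow_condExp_mul_le (hm₁₂ : m₁ ≤ m₂) (hm₂ : m₂ ≤ m0) {X Y : Ω → ℝ}
    (hX : MemLp X ∞ μ) (hX0 : 0 ≤ᵐ[μ] X) (hY : StronglyMeasurable[m₂] Y)
    (hYb : MemLp Y ∞ μ) (hY0 : 0 ≤ᵐ[μ] Y) (q : ℕ) :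
    μ[fun ω => μ[X|m₂] ω ^ q * Y ω|m₁] ≤ᵐ[μ] μ[fun ω => X ω ^ q * Y ω|m₁] := by
  have hXq := hX.pow_top q
  have hjensen : (fun ω => μ[X|m₂] ω ^ q * Y ω) ≤ᵐ[μ]
      fun ω => μ[fun ω => X ω ^ q|m₂] ω * Y ω := by
    filter_upwards [pow_condExp_le_condExp_pow hm₂ hX hX0 q, hY0] with ω hω hYω
    exact mul_le_mul_of_nonneg_right hω hYω
  filter_upwards [condExp_mono (m := m₁)
      ((hYb.mul' ((hX.condExp le_top).pow_top q)).integrable le_top)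
      ((hYb.mul' (hXq.condExp le_top)).integrable le_top) hjensen,
    condExp_condExp_mul_of_le hm₁₂ hm₂ hY ((hYb.mul' hXq).integrable le_top)
      (hXq.integrable le_top)] with ω hle heq
  exact hle.trans heq.le

end SubSigmaAlgebras

section Filtration

variable {𝒢 : Filtration ℕ m0} {f : Ω → ℝ}

theorem memLp_top_prod_condExp [IsFiniteMeasure μ] (hf : MemLp f ∞ μ) {ι : Type*}
    (s : Finset ι) (ms : ι → ℕ) :
    MemLp (fun ω => ∏ i ∈ s, μ[f|𝒢 (ms i)] ω) ∞ μ := by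
  simpa using MemLp.prod' (s := s) fun i _ => hf.condExp (m := 𝒢 (ms i)) le_top

theorem stronglyMeasurable_prod_condExp {ι : Type*} (s : Finset ι) {ms : ι → ℕ} {k : ℕ}
    (hk : ∀ i ∈ s, ms i ≤ k) :
    StronglyMeasurable[𝒢 k] (fun ω => ∏ i ∈ s, μ[f|𝒢 (ms i)] ω) :=
  Finset.stronglyMeasurable_fun_prod s fun i hi =>
    stronglyMeasurable_condExp.mono (𝒢.mono (hk i hi))

theorem prod_condExp_nonneg (hf0 : 0 ≤ᵐ[μ] f) {ι : Type*} [Countable ι] (s : Finset ι)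
    (ms : ι → ℕ) : 0 ≤ᵐ[μ] fun ω => ∏ i ∈ s, μ[f|𝒢 (ms i)] ω := by
  filter_upwards [ae_all_iff.2 fun i => condExp_nonneg (m := 𝒢 (ms i)) hf0] with ω hω
  exact Finset.prod_nonneg fun i _ => hω i

theorem pow_condExp_le_condExp_pow_mul_prod [IsFiniteMeasure μ] (hf : MemLp f ∞ μ)
    (hf0 : 0 ≤ᵐ[μ] f) {m : ℕ} (n : ℕ) (ms : Fin n → ℕ) {k : ℕ} (q : ℕ) (hmk : m ≤ k)
    (hm : ∀ i, m ≤ ms i) (hk : ∀ i, ms i ≤ k) :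
    ∀ᵐ ω ∂μ, μ[f|𝒢 m] ω ^ (q + n) ≤
      μ[fun ω => μ[f|𝒢 k] ω ^ q * ∏ i, μ[f|𝒢 (ms i)] ω|𝒢 m] ω := by
  induction n generalizing k q with
  | zero =>
    filter_upwards [condExp_condExp_of_le (𝒢.mono hmk) (𝒢.le k) (μ := μ) (f := f),
      pow_condExp_le_condExp_pow (𝒢.le m) (hf.condExp (m := 𝒢 k) le_top)
        (condExp_nonneg hf0) q]
      with ω htower hjensen
    simpa [htower] using hjensen
  | succ n ih =>
    obtain ⟨i₀, hi₀⟩ := Finite.exists_max ms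
    set k' := ms i₀
    set Y : Ω → ℝ := fun ω => μ[f|𝒢 k'] ω * ∏ i, μ[f|𝒢 (ms (i₀.succAbove i))] ω
    have hY : StronglyMeasurable[𝒢 k'] Y := stronglyMeasurable_condExp.mul
      (stronglyMeasurable_prod_condExp _ fun i _ => hi₀ _)
    have hYb : MemLp Y ∞ μ := (memLp_top_prod_condExp hf _ _).mul' (hf.condExp le_top)
    have hY0 : 0 ≤ᵐ[μ] Y := by
      filter_upwards [condExp_nonneg (m := 𝒢 k') hf0, prod_condExp_nonneg hf0 Finset.univ
        fun i => ms (i₀.succAbove i)] with ω h₁ h₂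
      exact mul_nonneg h₁ h₂
    have hsplit : ∀ ω, ∏ i, μ[f|𝒢 (ms i)] ω = Y ω := fun ω => Fin.prod_univ_succAbove _ i₀
    have htower : μ[fun ω => μ[f|𝒢 k'] ω ^ q * Y ω|𝒢 m] =ᵐ[μ]
        μ[fun ω => μ[μ[f|𝒢 k]|𝒢 k'] ω ^ q * Y ω|𝒢 m] := by
      refine condExp_congr_ae ?_
      filter_upwards [condExp_condExp_of_le (𝒢.mono (hk i₀)) (𝒢.le k) (μ := μ) (f := f)]
        with ω h
      rw [h]
    filter_upwards [ih _ (q + 1) (hm i₀) (fun i => hm _) (fun i => hi₀ _), htower,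
      condExp_pow_condExp_mul_le (𝒢.mono (hm i₀)) (𝒢.le k') (hf.condExp le_top)
        (condExp_nonneg hf0) hY hYb hY0 q] with ω hih hYtower hjensen
    simp only [hsplit]
    calc μ[f|𝒢 m] ω ^ (q + (n + 1)) = μ[f|𝒢 m] ω ^ (q + 1 + n) := by ring_nf
      _ ≤ _ := hih
      _ = μ[fun ω => μ[f|𝒢 k'] ω ^ q * Y ω|𝒢 m] ω := by
        congr 2
        funext ω
        simp only [Y, pow_succ]
        ring
      _ ≤ _ := hYtower.le.trans hjensen

end Filtration

end

/-- For a filtration `(G_m)` and nonnegative bounded measurable `f`, if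
`m ≤ min{m₁,…,m_n}` then
`E_m( f · (E_{m₁}f) ⋯ (E_{m_n}f) ) ≥ (E_m f)^{n+1}` a.s. -/
theorem condexp_product_lower_bound {Ω : Type*} {m0 : MeasurableSpace Ω}
    (μ : Measure Ω) [IsProbabilityMeasure μ] (𝒢 : Filtration ℕ m0)
    (f : Ω → ℝ) (hmeas : Measurable f) (hnonneg : ∀ ω, 0 ≤ f ω)
    (hbdd : ∃ C : ℝ, ∀ ω, f ω ≤ C)
    (n : ℕ) (m : ℕ) (ms : Fin n → ℕ) (hm : ∀ i, m ≤ ms i) :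
    ∀ᵐ ω ∂μ,
      (μ[f|𝒢 m]) ω ^ (n + 1) ≤
        (μ[fun ω' => f ω' * ∏ i : Fin n, (μ[f|𝒢 (ms i)]) ω' | 𝒢 m]) ω := by
  obtain ⟨C, hC⟩ := hbdd
  have hf : MemLp f ∞ μ := memLp_top_of_bound hmeas.aestronglyMeasurable C
    (ae_of_all _ fun ω => (Real.norm_of_nonneg (hnonneg ω)).trans_le (hC ω))
  have hf0 : 0 ≤ᵐ[μ] f := ae_of_all _ hnonneg
  set K := max m (Finset.univ.sup ms)
  have hK : ∀ i, ms i ≤ K := fun i => (Finset.le_sup (Finset.mem_univ i)).trans (le_max_right _ _)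
  have hpull := condExp_condExp_mul_of_le (m₁ := 𝒢 m) (𝒢.mono (le_max_left m _)) (𝒢.le K)
    (stronglyMeasurable_prod_condExp Finset.univ fun i _ => hK i)
    (((memLp_top_prod_condExp hf _ ms).mul' hf).integrable le_top) (hf.integrable le_top)
  filter_upwards [pow_condExp_le_condExp_pow_mul_prod hf hf0 n ms 1 (le_max_left m _) hm hK,
    hpull] with ω hle heq
  simpa [add_comm n 1, ← heq] using hle
end

section
/- Let (Ω, F, P) be a probability space with a filtration (G_m)_{m≥0}, E_m f := E(f|G_m). For any nonnegative bounded measurable f and nonnegative integers m₁, …, m_n, E( f · (E_{m₁}f) ⋯ (E_{m_n}f) ) ≥ (E f)^{n+1}. -/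
open MeasureTheory

/-! For `Y = E[X | 𝒢]` and a nonnegative `𝒢`-measurable weight `W`, integrating the tangent-line
inequality `x ^ (k + 1) ≥ y ^ (k + 1) + (k + 1) y ^ k (x - y)` against `W` gives
`E[Y ^ (k + 1) W] ≤ E[X ^ (k + 1) W]`: the tangent term integrates to zero by the pull-out property.
If `m` is the largest index, the whole product `∏ E_{m_i} f` is `𝒢_m`-measurable, so this step
turns `E[f ∏ E_{m_i} f]` into `E[(E_m f) ^ 2 ∏_{i ≠ i₀} E_{m_i} f]`. By the tower property the same
step applies to `X = E_m f` and the next largest index; after `n` steps, Jensen for the trivial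
σ-algebra leaves `(E f) ^ (n + 1)`. -/

lemma pow_succ_tangent_le (k : ℕ) {a b : ℝ} (ha : 0 ≤ a) (hb : 0 ≤ b) :
    b ^ (k + 1) + (k + 1) * b ^ k * (a - b) ≤ a ^ (k + 1) := by
  induction k with
  | zero => simp
  | succ k ih =>
    have hgap : 0 ≤ (k + 1) * b ^ k * (a - b) ^ 2 := by positivity
    have := mul_le_mul_of_nonneg_left ih ha
    push_cast
    linear_combination this + hgap

namespace MeasureTheory

variable {Ω : Type*} {m m0 : MeasurableSpace Ω} {μ : Measure Ω}

lemma MemLp.pow_top_s10 {X : Ω → ℝ} (hX : MemLp X ⊤ μ) : ∀ k : ℕ, MemLp (X ^ k) ⊤ μ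
  | 0 => by rw [pow_zero]; exact memLp_top_const 1
  | k + 1 => by rw [pow_succ]; exact hX.mul (hX.pow_top_s10 k)

lemma integral_mul_condExp (hm : m ≤ m0) [SigmaFinite (μ.trim hm)] {V X : Ω → ℝ}
    (hV : StronglyMeasurable[m] V) (hX : Integrable X μ) (hVX : Integrable (V * X) μ) :
    ∫ ω, V ω * (μ[X|m]) ω ∂μ = ∫ ω, V ω * X ω ∂μ :=
  calc ∫ ω, V ω * (μ[X|m]) ω ∂μ = ∫ ω, (μ[V * X|m]) ω ∂μ :=
        integral_congr_ae (condExp_mul_of_stronglyMeasurable_left hV hVX hX).symm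
    _ = ∫ ω, V ω * X ω ∂μ := integral_condExp hm

lemma integral_condExp_pow_mul_le (hm : m ≤ m0) [IsFiniteMeasure μ] {X W : Ω → ℝ}
    (hX : MemLp X ⊤ μ) (hX0 : 0 ≤ᵐ[μ] X) (hW : StronglyMeasurable[m] W) (hW_top : MemLp W ⊤ μ)
    (hW0 : 0 ≤ᵐ[μ] W) (k : ℕ) :
    ∫ ω, (μ[X|m]) ω ^ (k + 1) * W ω ∂μ ≤ ∫ ω, X ω ^ (k + 1) * W ω ∂μ := by
  set Y := μ[X|m]
  have hY : MemLp Y ⊤ μ := hX.condExp le_top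
  set V := Y ^ k * W
  have hV : StronglyMeasurable[m] V := (stronglyMeasurable_condExp.pow k).mul hW
  have hV_top : MemLp V ⊤ μ := hW_top.mul (hY.pow_top_s10 k)
  have hVX : Integrable (fun ω => V ω * X ω) μ := (hX.mul hV_top).integrable le_top
  have hVY : Integrable (fun ω => V ω * Y ω) μ := (hY.mul hV_top).integrable le_top
  have hYW : Integrable (fun ω => Y ω ^ (k + 1) * W ω) μ :=
    (hW_top.mul (hY.pow_top_s10 (k + 1))).integrable le_top
  have hXW : Integrable (fun ω => X ω ^ (k + 1) * W ω) μ :=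
    (hW_top.mul (hX.pow_top_s10 (k + 1))).integrable le_top
  have hlin : Integrable (fun ω => (k + 1 : ℝ) * (V ω * X ω - V ω * Y ω)) μ :=
    (hVX.sub hVY).const_mul _
  have htangent : ∀ᵐ ω ∂μ,
      Y ω ^ (k + 1) * W ω + (k + 1) * (V ω * X ω - V ω * Y ω) ≤ X ω ^ (k + 1) * W ω := by
    filter_upwards [hX0, condExp_nonneg hX0, hW0] with ω hXω hYω hWω
    calc Y ω ^ (k + 1) * W ω + (k + 1) * (V ω * X ω - V ω * Y ω)
        = (Y ω ^ (k + 1) + (k + 1) * Y ω ^ k * (X ω - Y ω)) * W ω := by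
          simp only [V, Pi.mul_apply, Pi.pow_apply]; ring
      _ ≤ X ω ^ (k + 1) * W ω := mul_le_mul_of_nonneg_right (pow_succ_tangent_le k hXω hYω) hWω
  calc ∫ ω, Y ω ^ (k + 1) * W ω ∂μ
      = ∫ ω, Y ω ^ (k + 1) * W ω + (k + 1) * (V ω * X ω - V ω * Y ω) ∂μ := by
        rw [integral_add hYW hlin, integral_const_mul,
          integral_sub hVX hVY, integral_mul_condExp hm hV (hX.integrable le_top) hVX,
          sub_self, mul_zero, add_zero]
    _ ≤ ∫ ω, X ω ^ (k + 1) * W ω ∂μ :=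
        integral_mono_ae (hYW.add hlin) hXW htangent

section Filtration

variable [IsProbabilityMeasure μ] {𝒢 : Filtration ℕ m0} {f : Ω → ℝ}

lemma integral_pow_le_integral_pow_mul_prod_condExp (hf : MemLp f ⊤ μ) (hf0 : 0 ≤ᵐ[μ] f)
    (n : ℕ) (ms : Fin n → ℕ) (k : ℕ) {X : Ω → ℝ} (hX : MemLp X ⊤ μ) (hX0 : 0 ≤ᵐ[μ] X)
    (hXf : ∀ i, μ[X|𝒢 (ms i)] =ᵐ[μ] μ[f|𝒢 (ms i)]) :
    (∫ ω, X ω ∂μ) ^ (k + 1 + n) ≤ ∫ ω, X ω ^ (k + 1) * ∏ i, (μ[f|𝒢 (ms i)]) ω ∂μ := by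
  induction n generalizing k X with
  | zero =>
    simpa [condExp_bot] using integral_condExp_pow_mul_le bot_le hX hX0 stronglyMeasurable_const
      (memLp_top_const 1) (ae_of_all _ fun _ => zero_le_one) k
  | succ n ih =>
    obtain ⟨i₀, hi₀⟩ := Finite.exists_max ms
    set M := ms i₀
    set P := ∏ j, μ[f|𝒢 (ms (i₀.succAbove j))]
    have hg_top : ∀ j, MemLp (μ[f|𝒢 j]) ⊤ μ := fun j => hf.condExp le_top
    have hg0 : ∀ j, 0 ≤ᵐ[μ] μ[f|𝒢 j] := fun j => condExp_nonneg hf0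
    have hW : StronglyMeasurable[𝒢 M] (μ[f|𝒢 M] * P) :=
      stronglyMeasurable_condExp.mul <| Finset.stronglyMeasurable_prod _ fun j _ =>
        stronglyMeasurable_condExp.mono (𝒢.mono (hi₀ _))
    have hW_top : MemLp (μ[f|𝒢 M] * P) ⊤ μ := by
      refine MemLp.mul (p := ⊤) (q := ⊤) ?_ (hg_top M)
      simpa using MemLp.prod (p := fun _ => ⊤) fun j _ => hg_top (ms (i₀.succAbove j))
    have hW0 : 0 ≤ᵐ[μ] μ[f|𝒢 M] * P := by
      filter_upwards [hg0 M, ae_all_iff.2 fun j => hg0 (ms (i₀.succAbove j))] with ω hM hP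
      simpa [P, Finset.prod_apply] using mul_nonneg hM (Finset.prod_nonneg fun j _ => hP j)
    have hXM : μ[X|𝒢 M] =ᵐ[μ] μ[f|𝒢 M] := hXf i₀
    have hmean : ∫ ω, X ω ∂μ = ∫ ω, (μ[f|𝒢 M]) ω ∂μ :=
      (integral_condExp (𝒢.le M)).symm.trans (integral_congr_ae hXM)
    calc (∫ ω, X ω ∂μ) ^ (k + 1 + (n + 1)) = (∫ ω, (μ[f|𝒢 M]) ω ∂μ) ^ (k + 1 + 1 + n) := by
          rw [hmean]; ring_nf
      _ ≤ ∫ ω, (μ[f|𝒢 M]) ω ^ (k + 1 + 1) * ∏ j, (μ[f|𝒢 (ms (i₀.succAbove j))]) ω ∂μ :=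
          ih _ (k + 1) (hg_top M) (hg0 M) fun j => condExp_condExp_of_le (𝒢.mono (hi₀ _)) (𝒢.le M)
      _ = ∫ ω, (μ[X|𝒢 M]) ω ^ (k + 1) * (μ[f|𝒢 M] * P) ω ∂μ := by
          refine integral_congr_ae ?_
          filter_upwards [hXM] with ω hω
          simp only [hω, P, Pi.mul_apply, Finset.prod_apply]
          ring
      _ ≤ ∫ ω, X ω ^ (k + 1) * (μ[f|𝒢 M] * P) ω ∂μ :=
          integral_condExp_pow_mul_le (𝒢.le M) hX hX0 hW hW_top hW0 k
      _ = ∫ ω, X ω ^ (k + 1) * ∏ i, (μ[f|𝒢 (ms i)]) ω ∂μ := by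
          simp only [Fin.prod_univ_succAbove _ i₀, P, Pi.mul_apply, Finset.prod_apply, M]

end Filtration

end MeasureTheory

/-- For a filtration `(G_m)` and nonnegative bounded measurable `f`,
`E( f · (E_{m₁}f) ⋯ (E_{m_n}f) ) ≥ (E f)^{n+1}`. -/
theorem expectation_product_lower_bound {Ω : Type*} {m0 : MeasurableSpace Ω}
    (μ : Measure Ω) [IsProbabilityMeasure μ] (𝒢 : Filtration ℕ m0)
    (f : Ω → ℝ) (hmeas : Measurable f) (hnonneg : ∀ ω, 0 ≤ f ω)
    (hbdd : ∃ C : ℝ, ∀ ω, f ω ≤ C)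
    (n : ℕ) (ms : Fin n → ℕ) :
    (∫ ω, f ω ∂μ) ^ (n + 1) ≤
      ∫ ω, f ω * ∏ i : Fin n, (μ[f|𝒢 (ms i)]) ω ∂μ := by
  obtain ⟨C, hC⟩ := hbdd
  have hf : MemLp f ⊤ μ := memLp_top_of_bound hmeas.aestronglyMeasurable C <|
    ae_of_all _ fun ω => (Real.norm_of_nonneg (hnonneg ω)).trans_le (hC ω)
  have := integral_pow_le_integral_pow_mul_prod_condExp (𝒢 := 𝒢) hf (ae_of_all _ hnonneg) n ms 0
    hf (ae_of_all _ hnonneg) fun _ => Filter.EventuallyEq.rfl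
  simpa [add_comm] using this
end

section
/- Let R > 0, d, n ≥ 1, and t₁,…,t_n ∈ (0, R/2]. Let φ = |B(0,1)|^{-1} 1_{B(0,1)} on ℝ^d and φ_t(x) = t^{-d}φ(x/t). Then there is a constant c = c(d,n) > 0 such that for every measurable f: [0,R]^d → [0,1], ⨍_{[0,R]^d} f(x) ∏_{k=1}^n (f ∗ φ_{t_k})(x) dx ≥ c ( ⨍_{[0,R]^d} f )^{n+1}, where f is extended by zero outside [0,R]^d and ⨍ denotes the average. -/
/-!
Averages over the cube are integrals against the normalized measure `P` on it. For each `t_k`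
pick a dyadic scale `s_k = R / 2 ^ j_k` with `(√d + 1) s_k < t_k ≤ 2 (√d + 1) s_k`. The dyadic
cell of side `s_k` containing `x` lies in the ball `B(x, t_k)` and has comparable volume, so
`(f ∗ φ_{t_k})(x)` dominates a constant `c(d)` times the average of `f` over that cell, which is
the conditional expectation `E_k f` of `f` given the dyadic σ-algebra of scale `s_k`.

These σ-algebras are nested, and for conditional expectations along any filtration, a
probability measure and `0 ≤ g ≤ 1`, `(∫ g) ^ (p + n) ≤ ∫ g ^ p ∏ₖ E_k g`. This goes by
induction on `n`: with `E` the expectation given the finest of the σ-algebras, the product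
`E g · ∏_{other k} E_k g` is `E`-measurable and `E_k g = E_k (E g)`, so conditional Jensen
`E (g ^ p) ≥ (E g) ^ p` bounds the right side below by the same expression for `E g`, `p + 1`
and `n - 1`; for `n = 0` it is Jensen's inequality.
-/

open Real MeasureTheory

def cube (d : ℕ) (R : ℝ) : Set (EuclideanSpace ℝ (Fin d)) :=
  {x | ∀ i, x i ∈ Set.Icc (0 : ℝ) R}

/-- The L¹-normalized indicator `φ = |B(0,1)|⁻¹ 1_{B(0,1)}` of the unit ball,
dilated by `t`: `φ_t(x) = t^{-d} φ(x/t)`. -/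
noncomputable def ballDil (d : ℕ) (t : ℝ) (x : EuclideanSpace ℝ (Fin d)) : ℝ :=
  (t ^ d)⁻¹ * ((volume (Metric.ball (0 : EuclideanSpace ℝ (Fin d)) 1)).toReal⁻¹ *
    (Metric.ball (0 : EuclideanSpace ℝ (Fin d)) 1).indicator (fun _ => (1 : ℝ)) (t⁻¹ • x))

open ProbabilityTheory Set

section CondExp

variable {Ω : Type*} {m mΩ : MeasurableSpace Ω} {μ : Measure Ω} [IsFiniteMeasure μ]

lemma condExp_mem_Icc_zero_one (hm : m ≤ mΩ) {g : Ω → ℝ} (hg : Integrable g μ)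
    (hg01 : ∀ᵐ x ∂μ, g x ∈ Icc (0 : ℝ) 1) : ∀ᵐ x ∂μ, μ[g | m] x ∈ Icc (0 : ℝ) 1 := by
  have hle : μ[g | m] ≤ᵐ[μ] μ[fun _ => (1 : ℝ) | m] :=
    condExp_mono hg (integrable_const 1) (hg01.mono fun _ hx => hx.2)
  filter_upwards [condExp_nonneg (m := m) (hg01.mono fun _ hx => hx.1), hle] with x h0 h1
  exact ⟨h0, by simpa [condExp_const hm] using h1⟩

lemma pow_condExp_le_condExp_pow_s12 (hm : m ≤ mΩ) {g : Ω → ℝ} (hg : Integrable g μ)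
    (hg01 : ∀ᵐ x ∂μ, g x ∈ Icc (0 : ℝ) 1) (p : ℕ) :
    ∀ᵐ x ∂μ, μ[g | m] x ^ p ≤ μ[fun x => g x ^ p | m] x :=
  (convexOn_pow p).map_condExp_le (φ := fun x : ℝ => x ^ p) hm
    ((continuous_pow p).lowerSemicontinuous.lowerSemicontinuousOn _)
    (hg01.mono fun _ hx => hx.1) isClosed_Ici hg
    (Integrable.of_mem_Icc 0 1 (hg.aemeasurable.pow_const p)
      (hg01.mono fun _ hx => pow_mem (S := unitInterval.submonoid) hx p))

lemma integral_condExp_pow_mul_le (hm : m ≤ mΩ) {g G : Ω → ℝ} (hg : Integrable g μ)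
    (hg01 : ∀ᵐ x ∂μ, g x ∈ Icc (0 : ℝ) 1) (hG : StronglyMeasurable[m] G)
    (hG01 : ∀ᵐ x ∂μ, G x ∈ Icc (0 : ℝ) 1) (p : ℕ) :
    ∫ x, μ[g | m] x ^ p * G x ∂μ ≤ ∫ x, g x ^ p * G x ∂μ := by
  have hgp01 : ∀ᵐ x ∂μ, g x ^ p ∈ Icc (0 : ℝ) 1 :=
    hg01.mono fun _ hx => pow_mem (S := unitInterval.submonoid) hx p
  have hgp : Integrable (fun x => g x ^ p) μ :=
    Integrable.of_mem_Icc 0 1 (hg.aemeasurable.pow_const p) hgp01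
  have hGm : AEMeasurable G μ := (hG.mono hm).measurable.aemeasurable
  calc ∫ x, μ[g | m] x ^ p * G x ∂μ ≤ ∫ x, μ[fun x => g x ^ p | m] x * G x ∂μ := by
        refine integral_mono_ae ?_ ?_ ?_
        · refine Integrable.of_mem_Icc 0 1
            ((integrable_condExp.aemeasurable.pow_const p).mul hGm) ?_
          filter_upwards [condExp_mem_Icc_zero_one hm hg hg01, hG01] with x hx hGx
          exact unitInterval.mul_mem (pow_mem (S := unitInterval.submonoid) hx p) hGx
        · refine Integrable.of_mem_Icc 0 1 (integrable_condExp.aemeasurable.mul hGm) ?_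
          filter_upwards [condExp_mem_Icc_zero_one hm hgp hgp01, hG01] with x hx hGx
          exact unitInterval.mul_mem hx hGx
        · filter_upwards [pow_condExp_le_condExp_pow_s12 hm hg hg01 p, hG01] with x hx hGx
          exact mul_le_mul_of_nonneg_right hx hGx.1
    _ = ∫ x, μ[G * fun x => g x ^ p | m] x ∂μ := by
        refine integral_congr_ae ?_
        filter_upwards [condExp_stronglyMeasurable_mul_of_bound hm hG hgp 1
          (hG01.mono fun x hx => by rw [Real.norm_of_nonneg hx.1]; exact hx.2)] with x hx
        rw [hx, Pi.mul_apply, mul_comm]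
    _ = ∫ x, g x ^ p * G x ∂μ := by
        rw [integral_condExp hm]
        simp only [Pi.mul_apply, mul_comm]

theorem integral_pow_le_integral_mul_prod_condExp {ι : Type*} [LinearOrder ι]
    [IsProbabilityMeasure μ] (ℱ : Filtration ι mΩ) {n : ℕ} (j : Fin n → ι) (p : ℕ) {g : Ω → ℝ}
    (hg : AEStronglyMeasurable g μ) (hg01 : ∀ᵐ x ∂μ, g x ∈ Icc (0 : ℝ) 1) :
    (∫ x, g x ∂μ) ^ (p + n) ≤ ∫ x, g x ^ p * ∏ k, μ[g | ℱ (j k)] x ∂μ := by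
  have hgi : Integrable g μ := Integrable.of_mem_Icc 0 1 hg.aemeasurable hg01
  induction n generalizing p g with
  | zero =>
    simp only [Finset.univ_eq_empty, Finset.prod_empty, mul_one, add_zero]
    exact (convexOn_pow p).map_integral_le (continuous_pow p).continuousOn isClosed_Ici
      (hg01.mono fun _ hx => hx.1) hgi
      (Integrable.of_mem_Icc 0 1 (hg.aemeasurable.pow_const p)
        (hg01.mono fun _ hx => pow_mem (S := unitInterval.submonoid) hx p))
  | succ n ih =>
    obtain ⟨k₀, -, hk₀⟩ := Finset.univ.exists_max_image j Finset.univ_nonempty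
    have hm := ℱ.le (j k₀)
    set h := μ[g | ℱ (j k₀)]
    set j' := j ∘ k₀.succAbove
    have hh01 := condExp_mem_Icc_zero_one hm hgi hg01
    have htower : ∀ k, μ[h | ℱ (j' k)] =ᵐ[μ] μ[g | ℱ (j' k)] :=
      fun k => condExp_condExp_of_le (ℱ.mono (hk₀ _ (Finset.mem_univ _))) hm
    set G := fun x => h x * ∏ k, μ[h | ℱ (j' k)] x
    have hGm : StronglyMeasurable[ℱ (j k₀)] G :=
      stronglyMeasurable_condExp.mul <| Finset.stronglyMeasurable_fun_prod _ fun k _ =>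
        stronglyMeasurable_condExp.mono (ℱ.mono (hk₀ _ (Finset.mem_univ _)))
    have hG01 : ∀ᵐ x ∂μ, G x ∈ Icc (0 : ℝ) 1 := by
      filter_upwards [hh01, ae_all_iff.2 fun k =>
        condExp_mem_Icc_zero_one (ℱ.le (j' k)) integrable_condExp hh01] with x hx hxk
      exact unitInterval.mul_mem hx (unitInterval.prod_mem fun k _ => hxk k)
    calc (∫ x, g x ∂μ) ^ (p + (n + 1)) = (∫ x, h x ∂μ) ^ (p + 1 + n) := by
          rw [integral_condExp hm]; ring_nf
      _ ≤ ∫ x, h x ^ (p + 1) * ∏ k, μ[h | ℱ (j' k)] x ∂μ :=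
          ih j' (p + 1) integrable_condExp.aestronglyMeasurable hh01 integrable_condExp
      _ = ∫ x, h x ^ p * G x ∂μ := by simp only [G, pow_succ, mul_assoc]
      _ ≤ ∫ x, g x ^ p * G x ∂μ := integral_condExp_pow_mul_le hm hgi hg01 hGm hG01 p
      _ = ∫ x, g x ^ p * ∏ k, μ[g | ℱ (j k)] x ∂μ := by
          refine integral_congr_ae ?_
          filter_upwards [ae_all_iff.2 htower] with x hx
          simp only [G, Fin.prod_univ_succAbove _ k₀]
          exact congrArg _ (congrArg _ (Finset.prod_congr rfl fun k _ => hx k))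

theorem condExp_comap_ae_eq_setAverage {α : Type*} [mα : MeasurableSpace α] [Countable α]
    [MeasurableSingletonClass α] {q : Ω → α} (hq : Measurable q) {f : Ω → ℝ}
    (hf : Integrable f μ) :
    ∀ᵐ x ∂μ, μ[f | mα.comap q] x = ⨍ y in q ⁻¹' {q x}, f y ∂μ := by
  have hm := hq.comap_le
  have hnull : ∀ᵐ x ∂μ, μ (q ⁻¹' {q x}) ≠ 0 := by
    have : {x | ¬μ (q ⁻¹' {q x}) ≠ 0} = ⋃ z ∈ {z | μ (q ⁻¹' {z}) = 0}, q ⁻¹' {z} := by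
      ext x; simp
    rw [ae_iff, this, measure_biUnion_null_iff (to_countable _)]
    exact fun z hz => hz
  filter_upwards [hnull] with x hx
  have hcell : MeasurableSet[mα.comap q] (q ⁻¹' {q x}) := ⟨{q x}, measurableSet_singleton _, rfl⟩
  have hint := setIntegral_condExp hm hf hcell
  rw [setIntegral_congr_fun (hm _ hcell) fun y hy => stronglyMeasurable_condExp.factorsThrough hy,
    setIntegral_const] at hint
  rw [setAverage_eq, ← hint, smul_smul, inv_mul_cancel₀, one_smul]
  exact (measureReal_ne_zero_iff (measure_ne_top _ _)).2 hx

end CondExp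

lemma average_smul_measure {Ω : Type*} [MeasurableSpace Ω] {c : ENNReal} (hc₀ : c ≠ 0)
    (hc : c ≠ ⊤) (μ : Measure Ω) (f : Ω → ℝ) : ⨍ x, f x ∂(c • μ) = ⨍ x, f x ∂μ := by
  simp only [average, Measure.smul_apply, smul_smul, smul_eq_mul]
  rw [ENNReal.mul_inv (Or.inl hc₀) (Or.inl hc), mul_comm _ c, ← mul_assoc,
    ENNReal.mul_inv_cancel hc₀ hc, one_mul]

lemma setAverage_cond_of_subset {Ω : Type*} [MeasurableSpace Ω] {μ : Measure Ω} {S C : Set Ω}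
    (hCS : C ⊆ S) (hS₀ : μ S ≠ 0) (hS : μ S ≠ ⊤) (f : Ω → ℝ) :
    ⨍ x in C, f x ∂μ[|S] = ⨍ x in C, f x ∂μ := by
  rw [ProbabilityTheory.cond, Measure.restrict_smul, Measure.restrict_restrict_of_subset hCS,
    average_smul_measure (ENNReal.inv_ne_zero.2 hS) (ENNReal.inv_ne_top.2 hS₀)]

lemma setAverage_eq_integral_cond {Ω : Type*} [MeasurableSpace Ω] (μ : Measure Ω) (f : Ω → ℝ)
    (s : Set Ω) : ⨍ x in s, f x ∂μ = ∫ x, f x ∂μ[|s] := by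
  rw [average, Measure.restrict_apply_univ]
  rfl

section DyadicGrid

variable {d : ℕ}

noncomputable def gridIndex (s : ℝ) (x : EuclideanSpace ℝ (Fin d)) : Fin d → ℤ :=
  fun i => ⌊x i / s⌋

abbrev gridCell (s : ℝ) (x : EuclideanSpace ℝ (Fin d)) : Set (EuclideanSpace ℝ (Fin d)) :=
  gridIndex s ⁻¹' {gridIndex s x}

lemma measurable_gridIndex (s : ℝ) : Measurable (gridIndex (d := d) s) :=
  measurable_pi_lambda _ fun i =>
    ((by fun_prop : Measurable fun x : EuclideanSpace ℝ (Fin d) => x i).div_const s).floor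

lemma gridIndex_div_pow_eq {R : ℝ} {j j' : ℕ} (h : j ≤ j') (x : EuclideanSpace ℝ (Fin d)) :
    gridIndex (R / 2 ^ j) x = fun i => gridIndex (R / 2 ^ j') x i / 2 ^ (j' - j) := by
  funext i
  have hpow : (2 : ℝ) ^ j' = 2 ^ j * 2 ^ (j' - j) := by rw [← pow_add, Nat.add_sub_cancel' h]
  have := Int.floor_div_natCast (x i / (R / 2 ^ j')) (2 ^ (j' - j))
  push_cast at this
  rw [gridIndex, gridIndex, ← this, hpow]
  congr 1
  field_simp

noncomputable def dyadicFiltration (d : ℕ) (R : ℝ) :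
    Filtration ℕ (inferInstance : MeasurableSpace (EuclideanSpace ℝ (Fin d))) where
  seq j := MeasurableSpace.comap (gridIndex (R / 2 ^ j)) inferInstance
  mono' j j' h := by
    have : gridIndex (d := d) (R / 2 ^ j) =
        (fun z i => z i / 2 ^ (j' - j)) ∘ gridIndex (R / 2 ^ j') :=
      funext (gridIndex_div_pow_eq h)
    dsimp only
    rw [this, ← MeasurableSpace.comap_comp]
    exact MeasurableSpace.comap_mono (measurable_of_countable _).comap_le
  le' j := (measurable_gridIndex _).comap_le

lemma mem_gridCell_iff {s : ℝ} (hs : 0 < s) {x y : EuclideanSpace ℝ (Fin d)} :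
    y ∈ gridCell s x ↔ ∀ i, y i ∈ Ico (s * ⌊x i / s⌋) (s * ⌊x i / s⌋ + s) := by
  simp only [mem_preimage, mem_singleton_iff, funext_iff, gridIndex, Int.floor_eq_iff, mem_Ico,
    le_div_iff₀ hs, div_lt_iff₀ hs]
  exact forall_congr' fun i => and_congr (by rw [mul_comm]) (by rw [add_mul, one_mul, mul_comm])

lemma volume_gridCell {s : ℝ} (hs : 0 < s) (x : EuclideanSpace ℝ (Fin d)) :
    volume (gridCell s x) = ENNReal.ofReal (s ^ d) := by
  have : gridCell s x =
      WithLp.ofLp ⁻¹' univ.pi fun i => Ico (s * ⌊x i / s⌋) (s * ⌊x i / s⌋ + s) := by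
    ext y; simp [mem_gridCell_iff hs]
  rw [this, (PiLp.volume_preserving_ofLp _).measure_preimage
    (MeasurableSet.univ_pi fun _ => measurableSet_Ico).nullMeasurableSet, volume_pi_pi]
  simp [Real.volume_Ico, ENNReal.ofReal_pow hs.le]

lemma dist_le_of_mem_gridCell {s : ℝ} (hs : 0 < s) {x y : EuclideanSpace ℝ (Fin d)}
    (hy : y ∈ gridCell s x) : dist y x ≤ √d * s := by
  have hcoord : ∀ i, dist (y i) (x i) ^ 2 ≤ s ^ 2 := fun i => by
    have hyi := (mem_gridCell_iff hs).1 hy i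
    have hxi := (mem_gridCell_iff hs).1 (rfl : x ∈ gridCell s x) i
    rw [mem_Ico] at hyi hxi
    rw [Real.dist_eq, sq_abs]
    nlinarith
  calc dist y x = √(∑ i, dist (y i) (x i) ^ 2) := EuclideanSpace.dist_eq y x
    _ ≤ √(d * s ^ 2) := Real.sqrt_le_sqrt <| by
        simpa using Finset.sum_le_sum fun i (_ : i ∈ Finset.univ) => hcoord i
    _ = √d * s := by rw [Real.sqrt_mul (Nat.cast_nonneg d), Real.sqrt_sq hs.le]

lemma gridCell_subset_pi_Ico {R : ℝ} (hR : 0 < R) (j : ℕ) {x : EuclideanSpace ℝ (Fin d)}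
    (hx : ∀ i, x i ∈ Ico 0 R) : gridCell (R / 2 ^ j) x ⊆ {y | ∀ i, y i ∈ Ico 0 R} := by
  intro y hy i
  have hs : 0 < R / 2 ^ j := by positivity
  have hyi := (mem_gridCell_iff hs).1 hy i
  have h0 : (0 : ℝ) ≤ ⌊x i / (R / 2 ^ j)⌋ :=
    Int.cast_nonneg (Int.floor_nonneg.2 (div_nonneg (hx i).1 hs.le))
  have h1 : (⌊x i / (R / 2 ^ j)⌋ : ℝ) + 1 ≤ 2 ^ j := by
    have : x i / (R / 2 ^ j) < 2 ^ j := by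
      rw [div_lt_iff₀ hs]; field_simp; exact (hx i).2
    have hlt : ⌊x i / (R / 2 ^ j)⌋ < (2 : ℤ) ^ j := Int.floor_lt.2 (by push_cast; exact this)
    exact_mod_cast Int.add_one_le_iff.2 hlt
  rw [mem_Ico] at hyi ⊢
  constructor
  · nlinarith
  · calc y i < R / 2 ^ j * (⌊x i / (R / 2 ^ j)⌋ + 1) := by linarith [hyi.2]
      _ ≤ R / 2 ^ j * 2 ^ j := by gcongr
      _ = R := by field_simp

lemma exists_dyadic_scale {K R t : ℝ} (hK : 1 ≤ K) (ht : 0 < t) (htR : t ≤ R) :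
    ∃ j : ℕ, K * (R / 2 ^ j) < t ∧ t ≤ 2 * K * (R / 2 ^ j) := by
  have hR : 0 < R := ht.trans_le htR
  obtain ⟨j, hj₁, hj₂⟩ := exists_nat_pow_near (x := K * R / t) (y := (2 : ℝ))
    ((one_le_div ht).2 (by nlinarith)) one_lt_two
  rw [le_div_iff₀ ht] at hj₁
  rw [div_lt_iff₀ ht] at hj₂
  refine ⟨j + 1, ?_, ?_⟩
  · rw [← mul_div_assoc, div_lt_iff₀ (by positivity)]
    linarith
  · rw [pow_succ, ← mul_div_assoc, le_div_iff₀ (by positivity)]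
    nlinarith

end DyadicGrid

section Cube

variable {d : ℕ}

lemma cube_eq_preimage_Icc (R : ℝ) :
    cube d R = WithLp.ofLp ⁻¹' Icc (fun _ => 0) (fun _ => R) := by
  ext x; simp [cube, Pi.le_def, forall_and]

lemma volume_cube {R : ℝ} (hR : 0 ≤ R) : volume (cube d R) = ENNReal.ofReal (R ^ d) := by
  rw [cube_eq_preimage_Icc, (PiLp.volume_preserving_ofLp _).measure_preimage
    measurableSet_Icc.nullMeasurableSet, Real.volume_Icc_pi]
  simp [ENNReal.ofReal_pow hR]

lemma ae_cond_cube_mem_pi_Ico (R : ℝ) : ∀ᵐ x ∂(volume[|cube d R]), ∀ i, x i ∈ Ico 0 R := by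
  have hS : MeasurableSet (WithLp.ofLp ⁻¹' univ.pi fun (_ : Fin d) => Ico (0 : ℝ) R) :=
    (PiLp.volume_preserving_ofLp (Fin d)).measurable
      (MeasurableSet.univ_pi fun _ => measurableSet_Ico)
  have hae : WithLp.ofLp ⁻¹' (univ.pi fun (_ : Fin d) => Ico (0 : ℝ) R) =ᵐ[volume] cube d R := by
    rw [cube_eq_preimage_Icc]
    exact (PiLp.volume_preserving_ofLp _).quasiMeasurePreserving.preimage_ae_eq
      Measure.univ_pi_Ico_ae_eq_Icc
  refine Measure.ae_smul_measure ?_ _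
  rw [← Measure.restrict_congr_set hae]
  filter_upwards [ae_restrict_mem hS] with x hx i
  exact hx i (mem_univ i)

end Cube

section BallAverage

variable {d : ℕ}

lemma volume_real_ball {t : ℝ} (ht : 0 < t) (x : EuclideanSpace ℝ (Fin d)) :
    volume.real (Metric.ball x t) =
      t ^ d * volume.real (Metric.ball (0 : EuclideanSpace ℝ (Fin d)) 1) := by
  rw [measureReal_def, Measure.addHaar_ball_of_pos _ _ ht, finrank_euclideanSpace_fin,
    ENNReal.toReal_mul, ENNReal.toReal_ofReal (by positivity), measureReal_def]

lemma volume_real_ball_pos {t : ℝ} (ht : 0 < t) (x : EuclideanSpace ℝ (Fin d)) :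
    0 < volume.real (Metric.ball x t) :=
  ENNReal.toReal_pos (Metric.measure_ball_pos volume x ht).ne' measure_ball_lt_top.ne

lemma inv_smul_sub_mem_ball_zero_iff {t : ℝ} (ht : 0 < t) (x y : EuclideanSpace ℝ (Fin d)) :
    t⁻¹ • (x - y) ∈ Metric.ball (0 : EuclideanSpace ℝ (Fin d)) 1 ↔ y ∈ Metric.ball x t := by
  rw [mem_ball_zero_iff, Metric.mem_ball, dist_eq_norm, norm_smul, norm_inv,
    Real.norm_eq_abs, abs_of_pos ht, ← norm_sub_rev x y, inv_mul_lt_iff₀ ht, mul_one]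

lemma integral_mul_ballDil_eq_setAverage {t : ℝ} (ht : 0 < t) (f : EuclideanSpace ℝ (Fin d) → ℝ)
    (x : EuclideanSpace ℝ (Fin d)) :
    ∫ y, f y * ballDil d t (x - y) = ⨍ y in Metric.ball x t, f y := by
  have hpt : ∀ y, f y * ballDil d t (x - y)
      = (volume.real (Metric.ball x t))⁻¹ * (Metric.ball x t).indicator f y := by
    intro y
    rw [ballDil, volume_real_ball ht, mul_inv, ← measureReal_def]
    by_cases hy : y ∈ Metric.ball x t
    · rw [indicator_of_mem ((inv_smul_sub_mem_ball_zero_iff ht x y).2 hy), indicator_of_mem hy]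
      ring
    · rw [indicator_of_notMem (mt (inv_smul_sub_mem_ball_zero_iff ht x y).1 hy),
        indicator_of_notMem hy]
      ring
  simp_rw [hpt]
  rw [integral_const_mul, integral_indicator measurableSet_ball, setAverage_eq, smul_eq_mul]

lemma measurable_integral_mul_ballDil {f : EuclideanSpace ℝ (Fin d) → ℝ} (hf : Measurable f)
    (t : ℝ) : Measurable fun x => ∫ y, f y * ballDil d t (x - y) := by
  have hφ : Measurable (ballDil d t) :=
    (((measurable_const.indicator measurableSet_ball).comp (measurable_const_smul _)).const_mul
      _).const_mul _
  exact ((hf.comp measurable_snd).mul (hφ.comp (measurable_fst.sub measurable_snd)))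
    |>.stronglyMeasurable.integral_prod_right'.measurable

lemma integral_mul_ballDil_mem_Icc {f : EuclideanSpace ℝ (Fin d) → ℝ} (hf : Measurable f)
    (hf01 : ∀ x, f x ∈ Icc (0 : ℝ) 1) {t : ℝ} (ht : 0 < t) (x : EuclideanSpace ℝ (Fin d)) :
    ∫ y, f y * ballDil d t (x - y) ∈ Icc (0 : ℝ) 1 := by
  rw [integral_mul_ballDil_eq_setAverage ht]
  exact (convex_Icc 0 1).set_average_mem isClosed_Icc (Metric.measure_ball_pos _ _ ht).ne'
    measure_ball_lt_top.ne (ae_of_all _ hf01)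
    (IntegrableOn.of_bound measure_ball_lt_top hf.aestronglyMeasurable 1
      (ae_of_all _ fun y => by rw [Real.norm_of_nonneg (hf01 y).1]; exact (hf01 y).2))

lemma setAverage_gridCell_le {s t : ℝ} (hs : 0 < s) (hst : √d * s < t)
    {f : EuclideanSpace ℝ (Fin d) → ℝ} (hf₀ : ∀ y, 0 ≤ f y) (x : EuclideanSpace ℝ (Fin d))
    (hfi : IntegrableOn f (Metric.ball x t)) :
    ⨍ y in gridCell s x, f y ≤
      (t / s) ^ d * volume.real (Metric.ball (0 : EuclideanSpace ℝ (Fin d)) 1) *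
        ∫ y, f y * ballDil d t (x - y) := by
  have ht : 0 < t := lt_of_le_of_lt (by positivity) hst
  have hB := volume_real_ball_pos (d := d) one_pos 0
  have hsub : gridCell s x ⊆ Metric.ball x t :=
    fun y hy => (dist_le_of_mem_gridCell hs hy).trans_lt hst
  have hmono : ∫ y in gridCell s x, f y ≤ ∫ y in Metric.ball x t, f y :=
    setIntegral_mono_set hfi (ae_of_all _ hf₀) hsub.eventuallyLE
  rw [integral_mul_ballDil_eq_setAverage ht, setAverage_eq, setAverage_eq, smul_eq_mul,
    smul_eq_mul, measureReal_def, volume_gridCell hs, ENNReal.toReal_ofReal (by positivity),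
    volume_real_ball ht]
  calc (s ^ d)⁻¹ * ∫ y in gridCell s x, f y
      ≤ (s ^ d)⁻¹ * ∫ y in Metric.ball x t, f y := by gcongr
    _ = _ := by rw [div_pow]; field_simp

end BallAverage

noncomputable def cellBallRatio (d : ℕ) : ℝ :=
  ((2 * (√d + 1)) ^ d * volume.real (Metric.ball (0 : EuclideanSpace ℝ (Fin d)) 1))⁻¹

lemma cellBallRatio_pos (d : ℕ) : 0 < cellBallRatio d :=
  inv_pos.2 (mul_pos (by positivity) (volume_real_ball_pos one_pos 0))

lemma condExp_dyadicFiltration_le {d : ℕ} {R t : ℝ} (hR : 0 < R) {j : ℕ}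
    (hj : (√d + 1) * (R / 2 ^ j) < t ∧ t ≤ 2 * (√d + 1) * (R / 2 ^ j))
    {f : EuclideanSpace ℝ (Fin d) → ℝ} (hf : Measurable f) (hf01 : ∀ x, f x ∈ Icc (0 : ℝ) 1) :
    ∀ᵐ x ∂volume[|cube d R], cellBallRatio d * (volume[|cube d R])[f | dyadicFiltration d R j] x
      ≤ ∫ y, f y * ballDil d t (x - y) := by
  set s := R / 2 ^ j
  set B := volume.real (Metric.ball (0 : EuclideanSpace ℝ (Fin d)) 1)
  have hs : 0 < s := by positivity
  have ht : 0 < t := lt_of_le_of_lt (by positivity) hj.1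
  have hB : 0 < B := volume_real_ball_pos one_pos 0
  have hcube : volume (cube d R) = ENNReal.ofReal (R ^ d) := volume_cube hR.le
  have hfi : Integrable f volume[|cube d R] :=
    Integrable.of_mem_Icc 0 1 hf.aemeasurable (ae_of_all _ hf01)
  filter_upwards [condExp_comap_ae_eq_setAverage (measurable_gridIndex s) hfi,
    ae_cond_cube_mem_pi_Ico R] with x hx hxR
  have hsub : gridCell s x ⊆ cube d R := fun y hy i =>
    Ico_subset_Icc_self (gridCell_subset_pi_Ico hR j hxR hy i)
  have hratio : (t / s) ^ d ≤ (2 * (√d + 1)) ^ d := by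
    gcongr
    rw [div_le_iff₀ hs]
    linarith [hj.2]
  change _ * (volume[|cube d R])[f | MeasurableSpace.comap (gridIndex s) inferInstance] x ≤ _
  rw [hx, setAverage_cond_of_subset hsub (by simp [hcube, hR]) (by simp [hcube])]
  calc _ ≤ ((2 * (√d + 1)) ^ d * B)⁻¹ * ((t / s) ^ d * B * ∫ y, f y * ballDil d t (x - y)) := by
        rw [cellBallRatio]
        gcongr
        exact setAverage_gridCell_le hs (by nlinarith [Real.sqrt_nonneg d]) (fun y => (hf01 y).1) x
          (IntegrableOn.of_bound measure_ball_lt_top hf.aestronglyMeasurable 1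
            (ae_of_all _ fun y => by rw [Real.norm_of_nonneg (hf01 y).1]; exact (hf01 y).2))
    _ ≤ 1 * ∫ y, f y * ballDil d t (x - y) := by
        rw [← mul_assoc]
        gcongr
        · exact (integral_mul_ballDil_mem_Icc hf hf01 ht x).1
        · rw [inv_mul_le_one₀ (by positivity)]
          gcongr
    _ = _ := one_mul _

lemma integral_mul_prod_condExp_dyadicFiltration_le {d n : ℕ} {R : ℝ} (hR : 0 < R)
    {t : Fin n → ℝ} {j : Fin n → ℕ}
    (hj : ∀ k, (√d + 1) * (R / 2 ^ j k) < t k ∧ t k ≤ 2 * (√d + 1) * (R / 2 ^ j k))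
    {f : EuclideanSpace ℝ (Fin d) → ℝ} (hf : Measurable f) (hf01 : ∀ x, f x ∈ Icc (0 : ℝ) 1) :
    cellBallRatio d ^ n *
        ∫ x, f x * ∏ k, (volume[|cube d R])[f | dyadicFiltration d R (j k)] x ∂volume[|cube d R]
      ≤ ∫ x, f x * ∏ k, (∫ y, f y * ballDil d (t k) (x - y)) ∂volume[|cube d R] := by
  set c₀ := cellBallRatio d
  set P := volume[|cube d R]
  have hc₀ : 0 < c₀ := cellBallRatio_pos d
  have ht k : 0 < t k := lt_of_le_of_lt (by positivity) (hj k).1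
  have hE₀ : ∀ᵐ x ∂P, ∀ k, 0 ≤ P[f | dyadicFiltration d R (j k)] x :=
    ae_all_iff.2 fun k => condExp_nonneg (ae_of_all _ fun x => (hf01 x).1)
  have hE := ae_all_iff.2 fun k => condExp_dyadicFiltration_le hR (hj k) hf hf01
  have hconv k x := integral_mul_ballDil_mem_Icc hf hf01 (ht k) x
  rw [← integral_const_mul]
  refine integral_mono_of_nonneg ?_ ?_ ?_
  · filter_upwards [hE₀] with x hx
    exact mul_nonneg (pow_nonneg hc₀.le n)
      (mul_nonneg (hf01 x).1 (Finset.prod_nonneg fun k _ => hx k))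
  · exact Integrable.of_mem_Icc 0 1 (hf.mul (Finset.measurable_prod _ fun k _ =>
      measurable_integral_mul_ballDil hf _)).aemeasurable (ae_of_all _ fun x =>
        unitInterval.mul_mem (hf01 x) (unitInterval.prod_mem fun k _ => hconv k x))
  · filter_upwards [hE₀, hE] with x hx₀ hx
    calc c₀ ^ n * (f x * ∏ k, P[f | dyadicFiltration d R (j k)] x)
        = f x * ∏ k, c₀ * P[f | dyadicFiltration d R (j k)] x := by
          rw [Finset.prod_mul_distrib, Finset.prod_const, Finset.card_univ, Fintype.card_fin]
          ring
      _ ≤ f x * ∏ k, ∫ y, f y * ballDil d (t k) (x - y) := by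
          gcongr ?_ * ?_
          · exact (hf01 x).1
          · exact Finset.prod_le_prod (fun k _ => mul_nonneg hc₀.le (hx₀ k)) fun k _ => hx k

theorem average_convolution_lower_bound_general (d n : ℕ) :
    ∃ c > (0 : ℝ), ∀ R > (0 : ℝ), ∀ t : Fin n → ℝ,
      (∀ k, t k ∈ Set.Ioc (0 : ℝ) (R / 2)) →
      ∀ f : EuclideanSpace ℝ (Fin d) → ℝ, Measurable f →
      (∀ x, f x ∈ Set.Icc (0 : ℝ) 1) → (∀ x, x ∉ cube d R → f x = 0) →
      c * (⨍ x in cube d R, f x) ^ (n + 1) ≤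
        ⨍ x in cube d R,
          f x * ∏ k : Fin n, ∫ y : EuclideanSpace ℝ (Fin d), f y * ballDil d (t k) (x - y) := by
  refine ⟨cellBallRatio d ^ n, pow_pos (cellBallRatio_pos d) n,
    fun R hR t ht f hf hf01 _ => ?_⟩
  choose j hj using fun k => exists_dyadic_scale (K := √d + 1) (by simp) (ht k).1
    ((ht k).2.trans (half_le_self hR.le))
  rw [setAverage_eq_integral_cond, setAverage_eq_integral_cond, add_comm]
  set P := volume[|cube d R]
  have : IsProbabilityMeasure P := cond_isProbabilityMeasure_of_finite
    (by simp [volume_cube hR.le, hR]) (by simp [volume_cube hR.le])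
  calc cellBallRatio d ^ n * (∫ x, f x ∂P) ^ (1 + n)
      ≤ cellBallRatio d ^ n * ∫ x, f x ^ 1 * ∏ k, P[f | dyadicFiltration d R (j k)] x ∂P :=
        mul_le_mul_of_nonneg_left (integral_pow_le_integral_mul_prod_condExp
          (dyadicFiltration d R) j 1 hf.aestronglyMeasurable (ae_of_all _ hf01))
          (pow_pos (cellBallRatio_pos d) n).le
    _ ≤ _ := by
        simpa only [pow_one] using integral_mul_prod_condExp_dyadicFiltration_le hR hj hf hf01

/-- There is a constant `c = c(d,n) > 0` such that for every `R > 0`, all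
`t₁,…,t_n ∈ (0,R/2]`, and every measurable `f : [0,R]^d → [0,1]` (extended by zero),
`⨍_{[0,R]^d} f ∏ₖ (f ∗ φ_{tₖ}) ≥ c (⨍_{[0,R]^d} f)^{n+1}`. -/
theorem average_convolution_lower_bound (d n : ℕ) (hd : 1 ≤ d) (hn : 1 ≤ n) :
    ∃ c > (0 : ℝ), ∀ R > (0 : ℝ), ∀ t : Fin n → ℝ,
      (∀ k, t k ∈ Set.Ioc (0 : ℝ) (R / 2)) →
      ∀ f : EuclideanSpace ℝ (Fin d) → ℝ, Measurable f →
      (∀ x, f x ∈ Set.Icc (0 : ℝ) 1) → (∀ x, x ∉ cube d R → f x = 0) →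
      c * (⨍ x in cube d R, f x) ^ (n + 1) ≤
        ⨍ x in cube d R,
          f x * ∏ k : Fin n, ∫ y : EuclideanSpace ℝ (Fin d), f y * ballDil d (t k) (x - y) :=
  average_convolution_lower_bound_general d n
end
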